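/- Assume principal binet lift data (bV, bF, uV, uF, hV, hF, ρV, ρF, σV, σF) satisfying relations (i)–(iv), and let P and Λ be the associated Lie lift vectors in ℝ⁶. Fix a cross: an edge (v, v') of ℤ² with its two flanking faces (f, f') (so v, v' are both corners of f and of f'). Then finrank of the submodule spanned by {P(v), Λ(v), P(v'), Λ(v')} plus finrank of the submodule spanned by {P(f), Λ(f), P(f'), Λ(f')} is at most 6. Consequently, if the span of {P(f), Λ(f), P(f'), Λ(f')} has finrank at least 3 and the pairs (P(v), Λ(v)) and (P(v'), Λ(v')) are each linearly independent, then the two planes span{P(v), Λ(v)} and span{P(v'), Λ(v')} have nontrivial intersection — adjacent lines of the Lie lift of a principal binet intersect, i.e. the Lie lift is a line bicongruence. -/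

import Mathlib

/-!
Relations (i)–(iv) say exactly that the Lie lift vectors of an incident vertex and face are
orthogonal for the Lie form: the entries `ρ ∓ 1/2` and `-h` are chosen so that the pairings are
`⟪b, b'⟫ - ρ - ρ'`, `⟪u, b⟫ + h` and `⟪u, u'⟫ - σ σ'`. Both vertices of a cross are incident to both
of its faces, so the span of the edge data lies in the orthogonal complement of the span of the
dual edge data, and nondegeneracy bounds the sum of their dimensions by `6`. If the face span has
dimension at least `3`, the two vertex planes lie in a space of dimension at most `3`, hence meet.
-/

open Matrix

/-- A vertex `v` is incident to the face labeled `f` if `v` is one of its four corners. -/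
def Incident (v f : ℤ × ℤ) : Prop :=
  v = f ∨ v = f + (1, 0) ∨ v = f + (0, 1) ∨ v = f + (1, 1)

/-- The Möbius part of the Lie lift: `P(d) = (b(d)₀, b(d)₁, b(d)₂, ρ(d) - 1/2, ρ(d) + 1/2, 0)`. -/
noncomputable def Plift (b : ℤ × ℤ → Fin 3 → ℝ) (ρ : ℤ × ℤ → ℝ) (d : ℤ × ℤ) : Fin 6 → ℝ :=
  ![b d 0, b d 1, b d 2, ρ d - 1 / 2, ρ d + 1 / 2, 0]

/-- The Laguerre part of the Lie lift: `Λ(d) = (u(d)₀, u(d)₁, u(d)₂, -h(d), -h(d), σ(d))`. -/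
noncomputable def Llift (u : ℤ × ℤ → Fin 3 → ℝ) (h σ : ℤ × ℤ → ℝ) (d : ℤ × ℤ) : Fin 6 → ℝ :=
  ![u d 0, u d 1, u d 2, -h d, -h d, σ d]

section LinearAlgebra

variable {K V : Type*} [Field K] [AddCommGroup V] [Module K V]

theorem LinearMap.BilinForm.span_le_orthogonal_span {B : LinearMap.BilinForm K V} {s t : Set V}
    (h : ∀ x ∈ s, ∀ y ∈ t, B x y = 0) :
    Submodule.span K t ≤ B.orthogonal (Submodule.span K s) := by
  rw [Submodule.span_le]
  intro y hy
  rw [SetLike.mem_coe, LinearMap.BilinForm.mem_orthogonal_iff]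
  intro x hx
  induction hx using Submodule.span_induction with
  | mem x hx => exact h x hx y hy
  | zero => simp
  | add a b _ _ ha hb => simp [ha, hb]
  | smul c a _ ha => simp [ha]

theorem LinearMap.BilinForm.Nondegenerate.finrank_add_finrank_le_of_le_orthogonal
    [FiniteDimensional K V] {B : LinearMap.BilinForm K V} (hB : B.Nondegenerate)
    {W U : Submodule K V} (h : U ≤ B.orthogonal W) :
    Module.finrank K W + Module.finrank K U ≤ Module.finrank K V := by
  have := Submodule.finrank_mono h
  rw [B.finrank_orthogonal hB] at this
  have := W.finrank_le
  omega

theorem Submodule.inf_ne_bot_of_finrank_sup_lt {W₁ W₂ : Submodule K V}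
    [FiniteDimensional K W₁] [FiniteDimensional K W₂]
    (h : Module.finrank K ↥(W₁ ⊔ W₂) < Module.finrank K W₁ + Module.finrank K W₂) :
    W₁ ⊓ W₂ ≠ ⊥ := by
  intro hbot
  have := Submodule.finrank_sup_add_finrank_inf_eq W₁ W₂
  rw [hbot, finrank_bot] at this
  omega

theorem finrank_span_pair {x y : V} (h : LinearIndependent K ![x, y]) :
    Module.finrank K (Submodule.span K ({x, y} : Set V)) = 2 := by
  rw [← Matrix.range_cons_cons_empty x y ![], finrank_span_eq_card h, Fintype.card_fin]

end LinearAlgebra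

/-- `Q_L = diag(1, 1, 1, 1, -1, -1)`. -/
noncomputable def lieForm : LinearMap.BilinForm ℝ (Fin 6 → ℝ) :=
  Matrix.toBilin' (Matrix.diagonal ![1, 1, 1, 1, -1, -1])

theorem lieForm_apply (x y : Fin 6 → ℝ) :
    lieForm x y = x 0 * y 0 + x 1 * y 1 + x 2 * y 2 + x 3 * y 3 - x 4 * y 4 - x 5 * y 5 := by
  simp [lieForm, Matrix.toBilin'_apply', Matrix.mulVec_diagonal, dotProduct, Fin.sum_univ_six]
  ring

theorem lieForm_nondegenerate : lieForm.Nondegenerate := by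
  refine Matrix.nondegenerate_toBilin'_iff.mpr (Matrix.nondegenerate_of_det_ne_zero ?_)
  simp [Matrix.det_diagonal, Fin.prod_univ_six]

section LieLift

variable (b b' : ℤ × ℤ → Fin 3 → ℝ) (u u' : ℤ × ℤ → Fin 3 → ℝ) (ρ ρ' h h' σ σ' : ℤ × ℤ → ℝ)
  (d g : ℤ × ℤ)

theorem lieForm_Plift_Plift :
    lieForm (Plift b ρ d) (Plift b' ρ' g) = b d ⬝ᵥ b' g - ρ d - ρ' g := by
  simp [lieForm_apply, Plift, dotProduct, Fin.sum_univ_three]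
  ring

theorem lieForm_Plift_Llift :
    lieForm (Plift b ρ d) (Llift u' h' σ' g) = u' g ⬝ᵥ b d + h' g := by
  simp [lieForm_apply, Plift, Llift, dotProduct, Fin.sum_univ_three]
  ring

theorem lieForm_Llift_Plift :
    lieForm (Llift u h σ d) (Plift b' ρ' g) = u d ⬝ᵥ b' g + h d := by
  simp [lieForm_apply, Plift, Llift, dotProduct, Fin.sum_univ_three]
  ring

theorem lieForm_Llift_Llift :
    lieForm (Llift u h σ d) (Llift u' h' σ' g) = u d ⬝ᵥ u' g - σ d * σ' g := by
  simp [lieForm_apply, Llift, dotProduct, Fin.sum_univ_three]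

end LieLift

theorem lieForm_lift_eq_zero_of_relations {bV bF uV uF : ℤ × ℤ → Fin 3 → ℝ}
    {hV hF ρV ρF σV σF : ℤ × ℤ → ℝ} {d g : ℤ × ℤ}
    (h1 : bV d ⬝ᵥ bF g = ρV d + ρF g) (h2 : uV d ⬝ᵥ uF g = σV d * σF g)
    (h3 : uF g ⬝ᵥ bV d + hF g = 0) (h4 : uV d ⬝ᵥ bF g + hV d = 0) :
    ∀ x ∈ ({Plift bV ρV d, Llift uV hV σV d} : Set (Fin 6 → ℝ)),
      ∀ y ∈ ({Plift bF ρF g, Llift uF hF σF g} : Set (Fin 6 → ℝ)), lieForm x y = 0 := by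
  rintro x (rfl | rfl) y (rfl | rfl)
  · rw [lieForm_Plift_Plift, h1]
    ring
  · rw [lieForm_Plift_Llift, h3]
  · rw [lieForm_Llift_Plift, h4]
  · rw [lieForm_Llift_Llift, h2, sub_self]

theorem incident_of_cross {v v' f f' : ℤ × ℤ}
    (hcross : (v' = v + (1, 0) ∧ f = v - (0, 1) ∧ f' = v) ∨
              (v' = v + (0, 1) ∧ f = v - (1, 0) ∧ f' = v)) :
    Incident v f ∧ Incident v f' ∧ Incident v' f ∧ Incident v' f' := by
  rcases hcross with ⟨rfl, rfl, rfl⟩ | ⟨rfl, rfl, rfl⟩ <;>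
    simp [Incident, Prod.ext_iff]

/-- At each cross of a principal binet, the spans of the Lie lift data on the edge and on the
dual edge have total rank at most `6`; consequently, under the stated nondegeneracy
assumptions, the two Lie lift lines at adjacent vertices intersect: the Lie lift is a line
bicongruence. -/
theorem stmt_14 (bV bF uV uF : ℤ × ℤ → Fin 3 → ℝ) (hV hF ρV ρF σV σF : ℤ × ℤ → ℝ)
    (h1 : ∀ v f : ℤ × ℤ, Incident v f → bV v ⬝ᵥ bF f = ρV v + ρF f)
    (h2 : ∀ v f : ℤ × ℤ, Incident v f → uV v ⬝ᵥ uF f = σV v * σF f)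
    (h3 : ∀ v f : ℤ × ℤ, Incident v f → uF f ⬝ᵥ bV v + hF f = 0)
    (h4 : ∀ v f : ℤ × ℤ, Incident v f → uV v ⬝ᵥ bF f + hV v = 0)
    (v v' f f' : ℤ × ℤ)
    (hcross : (v' = v + (1, 0) ∧ f = v - (0, 1) ∧ f' = v) ∨
              (v' = v + (0, 1) ∧ f = v - (1, 0) ∧ f' = v)) :
    Module.finrank ℝ (Submodule.span ℝ
        ({Plift bV ρV v, Llift uV hV σV v, Plift bV ρV v', Llift uV hV σV v'} :
          Set (Fin 6 → ℝ))) +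
      Module.finrank ℝ (Submodule.span ℝ
        ({Plift bF ρF f, Llift uF hF σF f, Plift bF ρF f', Llift uF hF σF f'} :
          Set (Fin 6 → ℝ))) ≤ 6 ∧
    (3 ≤ Module.finrank ℝ (Submodule.span ℝ
        ({Plift bF ρF f, Llift uF hF σF f, Plift bF ρF f', Llift uF hF σF f'} :
          Set (Fin 6 → ℝ))) →
      LinearIndependent ℝ ![Plift bV ρV v, Llift uV hV σV v] →
      LinearIndependent ℝ ![Plift bV ρV v', Llift uV hV σV v'] →
      Submodule.span ℝ ({Plift bV ρV v, Llift uV hV σV v} : Set (Fin 6 → ℝ)) ⊓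
        Submodule.span ℝ ({Plift bV ρV v', Llift uV hV σV v'} : Set (Fin 6 → ℝ)) ≠ ⊥) := by
  obtain ⟨hvf, hvf', hv'f, hv'f'⟩ := incident_of_cross hcross
  have ortho {d g : ℤ × ℤ} (hdg : Incident d g) :=
    lieForm_lift_eq_zero_of_relations (h1 d g hdg) (h2 d g hdg) (h3 d g hdg) (h4 d g hdg)
  have pair_union_pair (a b c e : Fin 6 → ℝ) : ({a, b, c, e} : Set _) = {a, b} ∪ {c, e} := by
    simp only [Set.insert_union, Set.singleton_union]
  rw [pair_union_pair, pair_union_pair, Submodule.span_union, Submodule.span_union]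
  set W₁ := Submodule.span ℝ ({Plift bV ρV v, Llift uV hV σV v} : Set (Fin 6 → ℝ))
  set W₂ := Submodule.span ℝ ({Plift bV ρV v', Llift uV hV σV v'} : Set (Fin 6 → ℝ))
  set U₁ := Submodule.span ℝ ({Plift bF ρF f, Llift uF hF σF f} : Set (Fin 6 → ℝ))
  set U₂ := Submodule.span ℝ ({Plift bF ρF f', Llift uF hF σF f'} : Set (Fin 6 → ℝ))
  have hrank : Module.finrank ℝ ↥(W₁ ⊔ W₂) + Module.finrank ℝ ↥(U₁ ⊔ U₂) ≤ 6 := by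
    refine (lieForm_nondegenerate.finrank_add_finrank_le_of_le_orthogonal ?_).trans_eq
      (Module.finrank_fin_fun ℝ)
    simp only [W₁, W₂, U₁, U₂, ← Submodule.span_union]
    refine LinearMap.BilinForm.span_le_orthogonal_span ?_
    rintro x (hx | hx) y (hy | hy)
    exacts [ortho hvf x hx y hy, ortho hvf' x hx y hy, ortho hv'f x hx y hy, ortho hv'f' x hx y hy]
  refine ⟨hrank, fun hU hli hli' => Submodule.inf_ne_bot_of_finrank_sup_lt ?_⟩
  rw [finrank_span_pair hli, finrank_span_pair hli']
  omega
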